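/- arXiv:1906.11545 — 4 statements merged into one kernel-verified Lean document; each statement's English description precedes it below -/
import Mathlib

section
/- For the 3-web (x,y,f) with f(x,y) = x + y + xy(x-y)·k(x,y), the Blaschke curvature at the origin is nonzero if and only if k(0,0) ≠ 0. -/
/-!
As functions of `y`, the partial derivatives of `f = x + y + xy(x - y)k` are
`∂ₓf = 1 + y((2x - y)k + x(x - y)∂ₓk)` and `∂_yf = 1 + x²k + y(x(x - y)∂_yk - 2xk)`.
Since `t ↦ t h(t)` with `h` continuous at `0` has derivative `h(0)` at `0`, this gives
`∂_y log(∂ₓf/∂_yf)` at `(x, 0)` in terms of `k` and its first partials alone, and the result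
is again of the form `x c(x)` with `c` continuous and `c(0) = 4k(0, 0)`. Hence
`K(0, 0) = 4k(0, 0)`, already for `k` of class `C¹`.
-/

/-- The Blaschke curvature function of the planar 3-web `(x, y, f)`:
`K(x,y) = ∂ₓ∂_y (log (∂ₓ f / ∂_y f))`. -/
noncomputable def blaschkeCurvature (f : ℝ → ℝ → ℝ) (x y : ℝ) : ℝ :=
  deriv (fun x' : ℝ =>
    deriv (fun y' : ℝ =>
      Real.log (deriv (fun s : ℝ => f s y') x' / deriv (fun s : ℝ => f x' s) y')) y) x

open Filter Topology Function

theorem ContinuousAt.hasDerivAt_id_mul {𝕜 : Type*} [NontriviallyNormedField 𝕜]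
    {h : 𝕜 → 𝕜} (hh : ContinuousAt h 0) : HasDerivAt (fun t => t * h t) (h 0) 0 := by
  rw [hasDerivAt_iff_tendsto_slope_zero]
  refine (hh.tendsto.mono_left nhdsWithin_le_nhds).congr' ?_
  filter_upwards [self_mem_nhdsWithin] with t (ht : t ≠ 0)
  simp [ht]

section Partial

variable {𝕜 G : Type*} [NontriviallyNormedField 𝕜] [NormedAddCommGroup G] [NormedSpace 𝕜 G]
  {k : 𝕜 → 𝕜 → G} {x y : 𝕜}

theorem DifferentiableAt.hasDerivAt_uncurry_left (hk : DifferentiableAt 𝕜 (uncurry k) (x, y)) :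
    HasDerivAt (fun s => k s y) (fderiv 𝕜 (uncurry k) (x, y) (1, 0)) x :=
  hk.hasFDerivAt.comp_hasDerivAt (f := fun s => (s, y)) x
    ((hasDerivAt_id x).prodMk (hasDerivAt_const x y))

theorem DifferentiableAt.hasDerivAt_uncurry_right (hk : DifferentiableAt 𝕜 (uncurry k) (x, y)) :
    HasDerivAt (fun s => k x s) (fderiv 𝕜 (uncurry k) (x, y) (0, 1)) y :=
  hk.hasFDerivAt.comp_hasDerivAt (f := fun s => (x, s)) y
    ((hasDerivAt_const y x).prodMk (hasDerivAt_id y))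

end Partial

def webNormalForm (k : ℝ → ℝ → ℝ) (x y : ℝ) : ℝ := x + y + x * y * (x - y) * k x y

section NormalForm

variable {k : ℝ → ℝ → ℝ} {x y : ℝ}

theorem hasDerivAt_webNormalForm_left (hk : DifferentiableAt ℝ (uncurry k) (x, y)) :
    HasDerivAt (fun s => webNormalForm k s y)
      (1 + y * ((2 * x - y) * k x y + x * (x - y) * fderiv ℝ (uncurry k) (x, y) (1, 0))) x := by
  have := ((hasDerivAt_id x).add_const y).add
    ((((hasDerivAt_id x).mul_const y).mul ((hasDerivAt_id x).sub_const y)).mul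
      hk.hasDerivAt_uncurry_left)
  exact this.congr_deriv (by simp only [id, Pi.mul_apply]; ring)

theorem hasDerivAt_webNormalForm_right (hk : DifferentiableAt ℝ (uncurry k) (x, y)) :
    HasDerivAt (fun s => webNormalForm k x s)
      (1 + x ^ 2 * k x y +
        y * (x * (x - y) * fderiv ℝ (uncurry k) (x, y) (0, 1) - 2 * x * k x y)) y := by
  have := ((hasDerivAt_id y).const_add x).add
    ((((hasDerivAt_id y).const_mul x).mul ((hasDerivAt_id y).const_sub x)).mul
      hk.hasDerivAt_uncurry_right)
  exact this.congr_deriv (by simp only [id, Pi.mul_apply]; ring)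

theorem hasDerivAt_log_div_deriv_webNormalForm (hk : ContDiffAt ℝ 1 (uncurry k) (x, 0))
    (hx : 1 + x ^ 2 * k x 0 ≠ 0) :
    HasDerivAt (fun y => Real.log (deriv (fun s => webNormalForm k s y) x /
        deriv (fun s => webNormalForm k x s) y))
      (x * (2 * k x 0 + x * fderiv ℝ (uncurry k) (x, 0) (1, 0) -
        (2 * x * fderiv ℝ (uncurry k) (x, 0) (0, 1) - 2 * k x 0) / (1 + x ^ 2 * k x 0))) 0 := by
  have hline : Tendsto (fun y => (x, y)) (𝓝 0) (𝓝 (x, (0 : ℝ))) :=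
    (Continuous.prodMk_right x).tendsto 0
  have hdiff : ∀ᶠ y in 𝓝 0, DifferentiableAt ℝ (uncurry k) (x, y) :=
    hline.eventually ((hk.eventually (by simp)).mono fun _ hp => hp.differentiableAt one_ne_zero)
  have hk₀ : ContinuousAt (fun y => k x y) 0 := hk.continuousAt.tendsto.comp hline
  have hk₁ : ContinuousAt (fun y => fderiv ℝ (uncurry k) (x, y) (1, 0)) 0 :=
    ((hk.continuousAt_fderiv one_ne_zero).clm_apply continuousAt_const).tendsto.comp hline
  have hk₂ : ContinuousAt (fun y => fderiv ℝ (uncurry k) (x, y) (0, 1)) 0 :=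
    ((hk.continuousAt_fderiv one_ne_zero).clm_apply continuousAt_const).tendsto.comp hline
  have hky : HasDerivAt (fun y => k x y) (fderiv ℝ (uncurry k) (x, 0) (0, 1)) 0 :=
    (hk.differentiableAt one_ne_zero).hasDerivAt_uncurry_right
  have hP := ((ContinuousAt.hasDerivAt_id_mul (h := fun y =>
      (2 * x - y) * k x y + x * (x - y) * fderiv ℝ (uncurry k) (x, y) (1, 0))
      (by fun_prop)).const_add 1).congr_of_eventuallyEq
    (hdiff.mono fun y hy => (hasDerivAt_webNormalForm_left hy).deriv)
  have hQ := ((hky.const_mul (x ^ 2)).const_add 1 |>.add (ContinuousAt.hasDerivAt_id_mul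
      (h := fun y => x * (x - y) * fderiv ℝ (uncurry k) (x, y) (0, 1) - 2 * x * k x y)
      (by fun_prop))).congr_of_eventuallyEq
    (hdiff.mono fun y hy => (hasDerivAt_webNormalForm_right hy).deriv)
  have hP₀ : deriv (fun s => webNormalForm k s 0) x = 1 := by
    simpa using (hasDerivAt_webNormalForm_left hdiff.self_of_nhds).deriv
  have hQ₀ : deriv (fun s => webNormalForm k x s) 0 = 1 + x ^ 2 * k x 0 := by
    simpa using (hasDerivAt_webNormalForm_right hdiff.self_of_nhds).deriv
  refine ((hP.div hQ (hQ₀ ▸ hx)).log ?_).congr_deriv ?_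
  · simpa [hP₀, hQ₀] using hx
  · simp only [Pi.div_apply, hP₀, hQ₀]
    field_simp
    ring

theorem blaschkeCurvature_webNormalForm_zero (hk : ContDiffAt ℝ 1 (uncurry k) (0, 0)) :
    blaschkeCurvature (webNormalForm k) 0 0 = 4 * k 0 0 := by
  have hline : Tendsto (fun x : ℝ => (x, (0 : ℝ))) (𝓝 0) (𝓝 (0, 0)) :=
    (Continuous.prodMk_left (0 : ℝ)).tendsto 0
  have hk₀ : ContinuousAt (fun x => k x 0) 0 := hk.continuousAt.tendsto.comp hline
  have hk₁ : ContinuousAt (fun x => fderiv ℝ (uncurry k) (x, 0) (1, 0)) 0 :=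
    ((hk.continuousAt_fderiv one_ne_zero).clm_apply continuousAt_const).tendsto.comp hline
  have hk₂ : ContinuousAt (fun x => fderiv ℝ (uncurry k) (x, 0) (0, 1)) 0 :=
    ((hk.continuousAt_fderiv one_ne_zero).clm_apply continuousAt_const).tendsto.comp hline
  have hden : ∀ᶠ x in 𝓝 0, 1 + x ^ 2 * k x 0 ≠ 0 :=
    ContinuousAt.eventually_ne (by fun_prop) (by simp)
  have hinner := (hline.eventually (hk.eventually (by simp))).and hden |>.mono
    fun x hx => (hasDerivAt_log_div_deriv_webNormalForm hx.1 hx.2).deriv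
  have houter := ContinuousAt.hasDerivAt_id_mul (h := fun x =>
    2 * k x 0 + x * fderiv ℝ (uncurry k) (x, 0) (1, 0) -
      (2 * x * fderiv ℝ (uncurry k) (x, 0) (0, 1) - 2 * k x 0) / (1 + x ^ 2 * k x 0))
    (ContinuousAt.sub (by fun_prop) (ContinuousAt.div (by fun_prop) (by fun_prop) (by simp)))
  rw [blaschkeCurvature, EventuallyEq.deriv_eq hinner, houter.deriv]
  ring

end NormalForm

/-- For the 3-web `(x, y, f)` with `f(x,y) = x + y + x y (x - y) k(x,y)` (with `k` analytic),
the Blaschke curvature at the origin is nonzero iff `k(0,0) ≠ 0`. -/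
theorem blaschkeCurvature_normalForm_ne_zero_iff (k : ℝ → ℝ → ℝ)
    (hk : AnalyticAt ℝ (fun p : ℝ × ℝ => k p.1 p.2) 0) :
    blaschkeCurvature (fun x y : ℝ => x + y + x * y * (x - y) * k x y) 0 0 ≠ 0 ↔
      k 0 0 ≠ 0 := by
  change blaschkeCurvature (webNormalForm k) 0 0 ≠ 0 ↔ _
  rw [blaschkeCurvature_webNormalForm_zero hk.contDiffAt]
  simp
end

section
/- At the level of formal power series: given a formal series G(t) = 2t + d₂t² + ⋯ over a field of characteristic zero, there exists a unique formal series U(t) = t + u₂t² + ⋯ with G(U(t)) = U(2t), and the coefficients uₙ are determined recursively since 2ⁿ - 2 ≠ 0 for n ≥ 2. -/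
open PowerSeries

/-! Comparing coefficients of `tⁿ` in `G(U(t)) = U(2t)` gives `2 uₙ + Tₙ(U) = 2ⁿ uₙ`, where
`Tₙ(U) = ∑_{2 ≤ k ≤ n} d_k [tⁿ] Uᵏ` involves only `u₁, …, u_{n-1}`, because `Uᵏ` is divisible
by `tᵏ`. Since `2ⁿ - 2 ≠ 0` for `n ≥ 2`, this recursion `(2ⁿ - 2) uₙ = Tₙ(U)` determines each
`uₙ` from the earlier ones, which gives both existence and uniqueness. -/

theorem two_pow_sub_two_ne_zero {R : Type*} [Ring R] [CharZero R] {n : ℕ} (hn : 2 ≤ n) :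
    (2 : R) ^ n - 2 ≠ 0 := by
  have h4 : (4 : ℤ) ≤ 2 ^ n :=
    calc (4 : ℤ) = 2 ^ 2 := by norm_num
      _ ≤ 2 ^ n := pow_le_pow_right₀ (by norm_num) hn
  have hne : (2 : ℤ) ^ n - 2 ≠ 0 := by omega
  exact_mod_cast (Int.cast_ne_zero (α := R)).mpr hne

theorem pow_succ_dvd_pow_sub_pow {R : Type*} [CommRing R] {x f g : R} {n k : ℕ}
    (hf : x ∣ f) (hg : x ∣ g) (hfg : x ^ n ∣ f - g) (hk : 2 ≤ k) :
    x ^ (n + 1) ∣ f ^ k - g ^ k := by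
  rw [← geom_sum₂_mul, pow_succ']
  refine mul_dvd_mul (Finset.dvd_sum fun i _ => ?_) hfg
  rcases Nat.eq_zero_or_pos i with rfl | hi0
  · exact Dvd.dvd.mul_left (dvd_pow hg (by omega)) _
  · exact Dvd.dvd.mul_right (dvd_pow hf hi0.ne') _

section Tail

variable {R : Type*} [CommRing R]

/-- `koenigsTail G U n` is `[tⁿ] G(U(t))` minus its linear part `(coeff 1 G) · [tⁿ] U`. -/
noncomputable def koenigsTail (G U : R⟦X⟧) (n : ℕ) : R :=
  ∑ k ∈ Finset.Icc 2 n, coeff k G * coeff n (U ^ k)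

theorem koenigsTail_congr (G : R⟦X⟧) {U V : R⟦X⟧} {n : ℕ} (hU : X ∣ U) (hV : X ∣ V)
    (hUV : X ^ n ∣ U - V) : koenigsTail G U n = koenigsTail G V n := by
  refine Finset.sum_congr rfl fun k hk => ?_
  have hdvd := pow_succ_dvd_pow_sub_pow hU hV hUV (Finset.mem_Icc.mp hk).1
  rw [← sub_eq_zero, ← mul_sub, ← map_sub, X_pow_dvd_iff.mp hdvd n n.lt_succ_self, mul_zero]

theorem koenigsTail_of_lt_two (G U : R⟦X⟧) {n : ℕ} (hn : n < 2) : koenigsTail G U n = 0 :=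
  Finset.sum_eq_zero fun k hk => by have := Finset.mem_Icc.mp hk; omega

theorem coeff_sum_C_mul_pow {G : R⟦X⟧} (U : R⟦X⟧) {n : ℕ} (hn : n ≠ 0) :
    coeff n (∑ k ∈ Finset.range (n + 1), C (coeff k G) * U ^ k)
      = coeff 1 G * coeff n U + koenigsTail G U n := by
  have hrange : Finset.range (n + 1) = insert 0 (insert 1 (Finset.Icc 2 n)) := by
    ext k
    simp only [Finset.mem_range, Finset.mem_insert, Finset.mem_Icc]
    omega
  simp only [map_sum, coeff_C_mul, hrange, koenigsTail]
  rw [Finset.sum_insert (by simp), Finset.sum_insert (by simp)]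
  simp [coeff_one, hn]

theorem koenigs_coeff_eq_iff {G U : R⟦X⟧} (hG0 : constantCoeff G = 0) (hG1 : coeff 1 G = 2)
    (hU0 : constantCoeff U = 0) (n : ℕ) :
    coeff n (∑ k ∈ Finset.range (n + 1), C (coeff k G) * U ^ k) = coeff n (rescale 2 U) ↔
      (2 ^ n - 2) * coeff n U = koenigsTail G U n := by
  rcases eq_or_ne n 0 with rfl | hn
  · simp [koenigsTail_of_lt_two, hG0, hU0]
  · rw [coeff_sum_C_mul_pow U hn, hG1, coeff_rescale]
    constructor <;> intro h <;> linear_combination -h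

end Tail

theorem eq_of_koenigs_recursion {R : Type*} [CommRing R] [IsDomain R] [CharZero R]
    {G U V : R⟦X⟧} (hU0 : constantCoeff U = 0) (hV0 : constantCoeff V = 0)
    (hU1 : coeff 1 U = 1) (hV1 : coeff 1 V = 1)
    (hU : ∀ n, (2 ^ n - 2) * coeff n U = koenigsTail G U n)
    (hV : ∀ n, (2 ^ n - 2) * coeff n V = koenigsTail G V n) : U = V := by
  ext n
  induction n using Nat.strong_induction_on with
  | _ n ih =>
    match n, ih with
    | 0, _ => simp [hU0, hV0]
    | 1, _ => rw [hU1, hV1]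
    | n + 2, ih =>
      have hUV : X ^ (n + 2) ∣ U - V :=
        X_pow_dvd_iff.mpr fun m hm => by rw [map_sub, ih m hm, sub_self]
      have hTail := koenigsTail_congr G (X_dvd_iff.mpr hU0) (X_dvd_iff.mpr hV0) hUV
      exact mul_left_cancel₀ (two_pow_sub_two_ne_zero (n := n + 2) (by omega)) <| by
        rw [hU, hV, hTail]

section Construction

variable {K : Type*} [Field K]

/-- `uₙ` is computed from the truncation `u₀ + ⋯ + u_{n-1} t^{n-1}`, which keeps the recursion
well founded; by `koenigsTail_congr` the truncation does not change `Tₙ`. -/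
noncomputable def koenigsCoeff (G : K⟦X⟧) : ℕ → K
  | 0 => 0
  | 1 => 1
  | n + 2 =>
    koenigsTail G (mk fun i => if i < n + 2 then koenigsCoeff G i else 0) (n + 2) /
      (2 ^ (n + 2) - 2)

noncomputable def koenigsSeries (G : K⟦X⟧) : K⟦X⟧ := mk (koenigsCoeff G)

theorem constantCoeff_koenigsSeries (G : K⟦X⟧) : constantCoeff (koenigsSeries G) = 0 := by
  rw [← coeff_zero_eq_constantCoeff_apply, koenigsSeries, coeff_mk, koenigsCoeff]

theorem coeff_one_koenigsSeries (G : K⟦X⟧) : coeff 1 (koenigsSeries G) = 1 := by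
  rw [koenigsSeries, coeff_mk, koenigsCoeff]

theorem koenigsSeries_recursion [CharZero K] (G : K⟦X⟧) (n : ℕ) :
    (2 ^ n - 2) * coeff n (koenigsSeries G) = koenigsTail G (koenigsSeries G) n := by
  match n with
  | 0 => simp [koenigsTail_of_lt_two, constantCoeff_koenigsSeries]
  | 1 => simp [koenigsTail_of_lt_two]
  | n + 2 =>
    set W : K⟦X⟧ := mk fun i => if i < n + 2 then koenigsCoeff G i else 0
    have hW0 : X ∣ W := X_dvd_iff.mpr <| by
      rw [← coeff_zero_eq_constantCoeff_apply, coeff_mk, if_pos (by omega), koenigsCoeff]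
    have hUW : X ^ (n + 2) ∣ koenigsSeries G - W := X_pow_dvd_iff.mpr fun m hm => by
      rw [map_sub, koenigsSeries, coeff_mk, coeff_mk, if_pos hm, sub_self]
    rw [koenigsTail_congr G (X_dvd_iff.mpr (constantCoeff_koenigsSeries G)) hW0 hUW,
      koenigsSeries, coeff_mk, koenigsCoeff,
      mul_div_cancel₀ _ (two_pow_sub_two_ne_zero (by omega))]

end Construction

/-- Formal Koenigs linearization: over a field of characteristic zero, for a formal
power series `G(t) = 2t + d₂t² + ⋯` there is a unique formal series
`U(t) = t + u₂t² + ⋯` with `G(U(t)) = U(2t)`; moreover `2ⁿ - 2 ≠ 0` for `n ≥ 2`,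
which is what makes the coefficients recursively determined.
Since `U` has zero constant term, the composition `G(U(t))` is well defined: its
`n`-th coefficient is the `n`-th coefficient of `∑_{k ≤ n} (coeff k G)·Uᵏ`. -/
theorem formal_koenigs (K : Type*) [Field K] [CharZero K] (G : PowerSeries K)
    (hG0 : PowerSeries.constantCoeff G = 0)
    (hG1 : PowerSeries.coeff 1 G = 2) :
    (∀ n : ℕ, 2 ≤ n → (2 : K) ^ n - 2 ≠ 0) ∧
    ∃! U : PowerSeries K,
      PowerSeries.constantCoeff U = 0 ∧ PowerSeries.coeff 1 U = 1 ∧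
        ∀ n : ℕ,
          PowerSeries.coeff n
            (∑ k ∈ Finset.range (n + 1), PowerSeries.C (PowerSeries.coeff k G) * U ^ k)
            = PowerSeries.coeff n (PowerSeries.rescale (2 : K) U) := by
  refine ⟨fun n hn => two_pow_sub_two_ne_zero hn, koenigsSeries G,
    ⟨constantCoeff_koenigsSeries G, coeff_one_koenigsSeries G, fun n => ?_⟩, ?_⟩
  · exact (koenigs_coeff_eq_iff hG0 hG1 (constantCoeff_koenigsSeries G) n).mpr
      (koenigsSeries_recursion G n)
  · rintro V ⟨hV0, hV1, hV⟩
    exact eq_of_koenigs_recursion hV0 (constantCoeff_koenigsSeries G) hV1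
      (coeff_one_koenigsSeries G) (fun n => (koenigs_coeff_eq_iff hG0 hG1 hV0 n).mp (hV n))
      (koenigsSeries_recursion G)
end

section
/- In the ring of formal power series K[[x,y]] over a field K of characteristic 0, if a series S vanishes on the axes x = 0, y = 0 and on the diagonal x = y (i.e., S(x,0) = 0, S(0,y) = 0, S(t,t) = 0 as one-variable series), then S is divisible by xy(x-y). -/
/-!
Vanishing on the two axes makes `S = x y B`. Under the diagonal restriction
`rename (fun _ => ())`, `x y` goes to `t²`, a non-zero-divisor, so `B(t,t) = 0` as well.
A series `B` with `B(t,t) = 0` is `(x - y) T`, where the coefficient of `x^i y^j` in `T` is minus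
the sum of the first `i + 1` coefficients of `B` of total degree `i + j + 1`: comparing
coefficients of `x^i y^j` in `(x - y) T` leaves the single term `b_{ij}` of a telescoping sum.
-/

open MvPowerSeries Finset Finsupp

theorem Finsupp.single_zero_add_single_one {M : Type*} [AddZeroClass M] (d : Fin 2 →₀ M) :
    single 0 (d 0) + single 1 (d 1) = d := by
  ext i; fin_cases i <;> simp

theorem Finsupp.mapDomain_const_fin_two {M : Type*} [AddCommMonoid M] (d : Fin 2 →₀ M) :
    mapDomain (fun _ => ()) d = single () (d 0 + d 1) := by
  rw [mapDomain, sum_fintype _ _ (by simp), Fin.sum_univ_two, single_add]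

namespace MvPowerSeries

theorem X_mul_X_dvd_iff {σ R : Type*} [CommSemiring R] {s t : σ} (hst : s ≠ t)
    {φ : MvPowerSeries σ R} :
    X s * X t ∣ φ ↔
      (∀ m : σ →₀ ℕ, m s = 0 → coeff m φ = 0) ∧ (∀ m : σ →₀ ℕ, m t = 0 → coeff m φ = 0) := by
  refine ⟨fun h => ⟨X_dvd_iff.mp ((dvd_mul_right _ _).trans h),
    X_dvd_iff.mp ((dvd_mul_left _ _).trans h)⟩, fun ⟨hs, ht⟩ => ?_⟩
  obtain ⟨ψ, rfl⟩ := X_dvd_iff.mpr hs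
  refine mul_dvd_mul_left _ (X_dvd_iff.mpr fun m hm => ?_)
  have := ht (single s 1 + m) (by simp [hm, hst])
  rwa [X_def, coeff_add_monomial_mul, one_mul] at this

variable {R : Type*} [CommRing R]

theorem coeff_rename_const_fin_two (f : MvPowerSeries (Fin 2) R) (n : ℕ) :
    coeff (single () n) (rename (fun _ : Fin 2 => ()) f) =
      ∑ i ∈ range (n + 1), coeff (single 0 i + single 1 (n - i)) f := by
  rw [coeff_rename, ← Nat.sum_antidiagonal_eq_sum_range_succ_mk
    (fun p => coeff (single 0 p.1 + single 1 p.2) f)]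
  refine sum_nbij' (fun d => (d 0, d 1)) (fun p => single 0 p.1 + single 1 p.2)
    (fun d hd => ?_) (fun p hp => ?_) (fun d _ => single_zero_add_single_one d)
    (fun p _ => by simp) (fun d _ => by rw [single_zero_add_single_one])
  · simpa [mapDomain_const_fin_two, -single_add] using hd
  · simpa [mapDomain_const_fin_two, -single_add] using hp

theorem X_sub_X_dvd_iff_rename_eq_zero {f : MvPowerSeries (Fin 2) R} :
    X 0 - X 1 ∣ f ↔ rename (fun _ : Fin 2 => ()) f = 0 := by
  refine ⟨fun ⟨g, hg⟩ => by simp [hg, rename_X], fun hf => ?_⟩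
  set b : ℕ → ℕ → R := fun i j => coeff (single 0 i + single 1 j) f
  set P : ℕ → ℕ → R := fun n i => ∑ k ∈ range i, b k (n - k)
  have hdiag (n : ℕ) : P n (n + 1) = 0 :=
    (coeff_rename_const_fin_two f n).symm.trans (by rw [hf, map_zero])
  let T : MvPowerSeries (Fin 2) R := fun e => -P (e 0 + e 1 + 1) (e 0 + 1)
  have hX0 (d : Fin 2 →₀ ℕ) : coeff d (X 0 * T) = -P (d 0 + d 1) (d 0) := by
    rw [X_def, coeff_monomial_mul]
    split_ifs with h <;> rw [single_le_iff] at h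
    · rw [one_mul]
      show -P _ _ = _
      simp only [tsub_apply, single_eq_same, single_eq_of_ne (show (1 : Fin 2) ≠ 0 by decide)]
      congr 2 <;> omega
    · simp [show d 0 = 0 by omega, P]
  have hX1 (d : Fin 2 →₀ ℕ) : coeff d (X 1 * T) = -P (d 0 + d 1) (d 0 + 1) := by
    rw [X_def, coeff_monomial_mul]
    split_ifs with h <;> rw [single_le_iff] at h
    · rw [one_mul]
      show -P _ _ = _
      simp only [tsub_apply, single_eq_same, single_eq_of_ne (show (0 : Fin 2) ≠ 1 by decide)]
      congr 2; omega
    · simp [show d 1 = 0 by omega, hdiag]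
  refine ⟨T, ext fun d => ?_⟩
  rw [sub_mul, map_sub, hX0, hX1, neg_sub_neg]
  simp only [P, sum_range_succ, add_sub_cancel_left, Nat.add_sub_cancel_left]
  exact congr_arg (coeff · f) (single_zero_add_single_one d).symm

end MvPowerSeries

theorem formal_divisibility_general (K : Type*) [Field K]
    (S : MvPowerSeries (Fin 2) K)
    -- S(x,0) = 0 :
    (hx : ∀ d : Fin 2 →₀ ℕ, d 1 = 0 → MvPowerSeries.coeff d S = 0)
    -- S(0,y) = 0 :
    (hy : ∀ d : Fin 2 →₀ ℕ, d 0 = 0 → MvPowerSeries.coeff d S = 0)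
    -- S(t,t) = 0 :
    (hd : ∀ n : ℕ, ∑ i ∈ Finset.range (n + 1),
      MvPowerSeries.coeff (Finsupp.single (0 : Fin 2) i + Finsupp.single 1 (n - i)) S = 0) :
    ∃ T : MvPowerSeries (Fin 2) K,
      S = MvPowerSeries.X 0 * MvPowerSeries.X 1 *
        (MvPowerSeries.X 0 - MvPowerSeries.X 1) * T := by
  obtain ⟨B, rfl⟩ := (X_mul_X_dvd_iff (by decide : (0 : Fin 2) ≠ 1)).mpr ⟨hy, hx⟩
  have hS : rename (fun _ : Fin 2 => ()) (X 0 * X 1 * B) = 0 := by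
    ext n
    exact (coeff_rename_const_fin_two _ n).trans (hd n)
  have hB : rename (fun _ : Fin 2 => ()) B = 0 := by
    have hX : (X () * X () : MvPowerSeries Unit K) ∈ nonZeroDivisors (MvPowerSeries Unit K) :=
      mul_mem X_mem_nonzeroDivisors X_mem_nonzeroDivisors
    rw [map_mul, map_mul, rename_X, rename_X] at hS
    exact (mul_left_mem_nonZeroDivisors_eq_zero_iff hX).mp hS
  obtain ⟨T, rfl⟩ := X_sub_X_dvd_iff_rename_eq_zero.mpr hB
  exact ⟨T, (mul_assoc _ _ _).symm⟩

/-- In `K[[x,y]]` (char 0), a series vanishing on both axes and on the diagonal is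
divisible by `x·y·(x-y)`. -/
theorem formal_divisibility (K : Type*) [Field K] [CharZero K]
    (S : MvPowerSeries (Fin 2) K)
    -- S(x,0) = 0 :
    (hx : ∀ d : Fin 2 →₀ ℕ, d 1 = 0 → MvPowerSeries.coeff d S = 0)
    -- S(0,y) = 0 :
    (hy : ∀ d : Fin 2 →₀ ℕ, d 0 = 0 → MvPowerSeries.coeff d S = 0)
    -- S(t,t) = 0 :
    (hd : ∀ n : ℕ, ∑ i ∈ Finset.range (n + 1),
      MvPowerSeries.coeff (Finsupp.single (0 : Fin 2) i + Finsupp.single 1 (n - i)) S = 0) :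
    ∃ T : MvPowerSeries (Fin 2) K,
      S = MvPowerSeries.X 0 * MvPowerSeries.X 1 *
        (MvPowerSeries.X 0 - MvPowerSeries.X 1) * T :=
  formal_divisibility_general K S hx hy hd
end

section
/- If a homography ψ of the projective plane maps a non-flat linear 3-web W onto a non-flat linear 3-web W̄ (sending leaves to leaves), then for every point M in the domain of W, car_W(M) = car_{W̄}(ψ(M)). -/
/-- Partial derivative in the second (`y`) variable. -/
noncomputable def pdy (F : ℝ × ℝ → ℝ) (M : ℝ × ℝ) : ℝ :=
  deriv (fun y : ℝ => F (M.1, y)) M.2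

/-- Partial derivative in the first (`x`) variable. -/
noncomputable def pdx (F : ℝ × ℝ → ℝ) (M : ℝ × ℝ) : ℝ :=
  deriv (fun x : ℝ => F (x, M.2)) M.1

/-- `Δ = (P-Q)R_y + (Q-R)P_y + (R-P)Q_y`. -/
noncomputable def webDelta (P Q R : ℝ × ℝ → ℝ) (M : ℝ × ℝ) : ℝ :=
  (P M - Q M) * pdy R M + (Q M - R M) * pdy P M + (R M - P M) * pdy Q M

/-- The characteristic `car = (P-Q)(Q-R)(R-P)·(P_yy + Q_yy + R_yy)/Δ²`. -/
noncomputable def webCar (P Q R : ℝ × ℝ → ℝ) (M : ℝ × ℝ) : ℝ :=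
  (P M - Q M) * (Q M - R M) * (R M - P M) *
    (pdy (pdy P) M + pdy (pdy Q) M + pdy (pdy R) M) / (webDelta P Q R M) ^ 2


/-!
Along a vertical line `τ ↦ (x, τ)` the homography moves with velocity `W / ℓ(τ)²`, where `ℓ` is
the denominator of `ψ` and `W = homographyDerivNum A M (0, 1)` does not depend on `τ`. With
`(s, n) = ℓ² dψ(1, F)`, the leaf condition says `F' ∘ ψ = n / s`, a Möbius function of `F` whose
coefficients are affine in `τ`, with slopes `(u₁, u₂) = homographyDerivNumDy A`. Differentiating
along the line, and using the equations `F'_x = -F' F'_y` and `(F'_y)_x = -F'_y² - F' F'_yy` of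
the linear image web to turn derivatives along `ψ (x, ·)` into `y`-derivatives, gives
`F'_y det A = ℓ (u₂ - u₁ F' + F_y T)` with `T = W₂ - F' W₁ = ℓ det A / s`, and then
`F'_yy det A = ℓ³ F_yy`. As `P' - Q' = ℓ det A (P - Q) / (s_P s_Q)` and the terms `u₂ - u₁ F'`
cancel in `Δ`, the numerator and the denominator of `car` are both multiplied by
`ℓ⁶ det A² / (s_P s_Q s_R)²`.
-/

open Filter Topology

section PartialDerivatives

variable {E : Type*} [NormedAddCommGroup E] [NormedSpace ℝ E] {F G : ℝ × ℝ → ℝ} {N : ℝ × ℝ}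

lemma hasDerivAt_vertical {Φ : ℝ × ℝ → E} (h : DifferentiableAt ℝ Φ N) :
    HasDerivAt (fun t => Φ (N.1, t)) (fderiv ℝ Φ N (0, 1)) N.2 :=
  h.hasFDerivAt.comp_hasDerivAt_of_eq N.2 ((hasDerivAt_const _ _).prodMk (hasDerivAt_id _)) rfl

lemma hasDerivAt_horizontal {Φ : ℝ × ℝ → E} (h : DifferentiableAt ℝ Φ N) :
    HasDerivAt (fun t => Φ (t, N.2)) (fderiv ℝ Φ N (1, 0)) N.1 :=
  h.hasFDerivAt.comp_hasDerivAt_of_eq N.1 ((hasDerivAt_id _).prodMk (hasDerivAt_const _ _)) rfl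

lemma pdy_eq_fderiv (h : DifferentiableAt ℝ F N) : pdy F N = fderiv ℝ F N (0, 1) :=
  (hasDerivAt_vertical h).deriv

lemma pdx_eq_fderiv (h : DifferentiableAt ℝ F N) : pdx F N = fderiv ℝ F N (1, 0) :=
  (hasDerivAt_horizontal h).deriv

lemma hasDerivAt_pdy (h : DifferentiableAt ℝ F N) :
    HasDerivAt (fun t => F (N.1, t)) (pdy F N) N.2 :=
  pdy_eq_fderiv h ▸ hasDerivAt_vertical h

lemma fderiv_apply_eq_pdx_pdy (h : DifferentiableAt ℝ F N) (v : ℝ × ℝ) :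
    fderiv ℝ F N v = v.1 * pdx F N + v.2 * pdy F N := by
  have hv : v = v.1 • ((1 : ℝ), (0 : ℝ)) + v.2 • ((0 : ℝ), (1 : ℝ)) := by simp
  rw [pdx_eq_fderiv h, pdy_eq_fderiv h, hv, map_add, map_smul, map_smul]
  simp

lemma hasDerivAt_comp_pdx_pdy {γ : ℝ → ℝ × ℝ} {v : ℝ × ℝ} {t : ℝ}
    (hF : DifferentiableAt ℝ F (γ t)) (hγ : HasDerivAt γ v t) :
    HasDerivAt (fun τ => F (γ τ)) (v.1 * pdx F (γ t) + v.2 * pdy F (γ t)) t :=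
  fderiv_apply_eq_pdx_pdy hF v ▸ hF.hasFDerivAt.comp_hasDerivAt t hγ

lemma pdy_congr (h : F =ᶠ[𝓝 N] G) : pdy F N = pdy G N :=
  (h.comp_tendsto ((continuous_const.prodMk continuous_id).tendsto' N.2 N rfl)).deriv_eq

lemma AnalyticAt.eventuallyEq_pdy (h : AnalyticAt ℝ F N) :
    pdy F =ᶠ[𝓝 N] fun M => fderiv ℝ F M (0, 1) := by
  filter_upwards [h.eventually_analyticAt] with M hM using pdy_eq_fderiv hM.differentiableAt

lemma AnalyticAt.eventuallyEq_pdx (h : AnalyticAt ℝ F N) :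
    pdx F =ᶠ[𝓝 N] fun M => fderiv ℝ F M (1, 0) := by
  filter_upwards [h.eventually_analyticAt] with M hM using pdx_eq_fderiv hM.differentiableAt

lemma AnalyticAt.pdy (h : AnalyticAt ℝ F N) : AnalyticAt ℝ (pdy F) N :=
  ((ContinuousLinearMap.apply ℝ ℝ ((0 : ℝ), (1 : ℝ))).analyticAt _).comp h.fderiv
    |>.congr h.eventuallyEq_pdy.symm

lemma AnalyticAt.hasFDerivAt_fderiv_apply (h : AnalyticAt ℝ F N) (v : ℝ × ℝ) :
    HasFDerivAt (fun M => fderiv ℝ F M v)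
      ((ContinuousLinearMap.apply ℝ ℝ v).comp (fderiv ℝ (fderiv ℝ F) N)) N :=
  (ContinuousLinearMap.apply ℝ ℝ v).hasFDerivAt.comp N h.fderiv.differentiableAt.hasFDerivAt

lemma pdx_pdy_comm (h : AnalyticAt ℝ F N) : pdx (pdy F) N = pdy (pdx F) N := by
  have hy := (h.hasFDerivAt_fderiv_apply (0, 1)).congr_of_eventuallyEq h.eventuallyEq_pdy
  have hx := (h.hasFDerivAt_fderiv_apply (1, 0)).congr_of_eventuallyEq h.eventuallyEq_pdx
  rw [pdx_eq_fderiv hy.differentiableAt, pdy_eq_fderiv hx.differentiableAt, hy.fderiv, hx.fderiv]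
  exact h.contDiffAt.isSymmSndFDerivAt_of_omega _ _

lemma pdx_pdy_of_linear_slope (h : AnalyticAt ℝ F N)
    (hlin : ∀ᶠ M in 𝓝 N, pdx F M + F M * pdy F M = 0) :
    pdx (pdy F) N = -(pdy F N ^ 2 + F N * pdy (pdy F) N) := by
  have hx : pdx F =ᶠ[𝓝 N] fun M => -(F M * pdy F M) := by
    filter_upwards [hlin] with M hM using by linear_combination hM
  rw [pdx_pdy_comm h, pdy_congr hx]
  calc pdy (fun M => -(F M * pdy F M)) N
      = -(pdy F N * pdy F N + F N * pdy (pdy F) N) :=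
        ((hasDerivAt_pdy h.differentiableAt).mul (hasDerivAt_pdy h.pdy.differentiableAt)).neg.deriv
    _ = -(pdy F N ^ 2 + F N * pdy (pdy F) N) := by ring

lemma hasDerivAt_comp_of_linear_slope {γ : ℝ → ℝ × ℝ} {v : ℝ × ℝ} {t : ℝ}
    (hF : DifferentiableAt ℝ F (γ t)) (hlin : pdx F (γ t) + F (γ t) * pdy F (γ t) = 0)
    (hγ : HasDerivAt γ v t) :
    HasDerivAt (fun τ => F (γ τ)) (pdy F (γ t) * (v.2 - F (γ t) * v.1)) t :=
  (hasDerivAt_comp_pdx_pdy hF hγ).congr_deriv (by linear_combination v.1 * hlin)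

lemma hasDerivAt_pdy_comp_of_linear_slope {γ : ℝ → ℝ × ℝ} {v : ℝ × ℝ} {t : ℝ}
    (hF : AnalyticAt ℝ F (γ t)) (hlin : ∀ᶠ M in 𝓝 (γ t), pdx F M + F M * pdy F M = 0)
    (hγ : HasDerivAt γ v t) :
    HasDerivAt (fun τ => pdy F (γ τ))
      (pdy (pdy F) (γ t) * (v.2 - F (γ t) * v.1) - pdy F (γ t) ^ 2 * v.1) t :=
  (hasDerivAt_comp_pdx_pdy hF.pdy.differentiableAt hγ).congr_deriv
    (by rw [pdx_pdy_of_linear_slope hF hlin]; ring)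

end PartialDerivatives

section Homography

variable (A : Matrix (Fin 3) (Fin 3) ℝ)

/-- The `i`-th homogeneous coordinate of the image of `M` under `A`, i.e. of `A (M.1, M.2, 1)ᵀ`. -/
def homCoord (i : Fin 3) (M : ℝ × ℝ) : ℝ := A i 0 * M.1 + A i 1 * M.2 + A i 2

noncomputable def homography (M : ℝ × ℝ) : ℝ × ℝ :=
  (homCoord A 0 M / homCoord A 2 M, homCoord A 1 M / homCoord A 2 M)

/-- `homCoord A 2 M ^ 2` times the differential of `homography A` at `M`. -/
def homographyDerivNum (M v : ℝ × ℝ) : ℝ × ℝ :=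
  ((A 0 0 * v.1 + A 0 1 * v.2) * homCoord A 2 M - (A 2 0 * v.1 + A 2 1 * v.2) * homCoord A 0 M,
   (A 1 0 * v.1 + A 1 1 * v.2) * homCoord A 2 M - (A 2 0 * v.1 + A 2 1 * v.2) * homCoord A 1 M)

/-- The `y`-derivative of `homographyDerivNum A M (1, p)`, which does not depend on `M` or `p`. -/
def homographyDerivNumDy : ℝ × ℝ :=
  (A 0 0 * A 2 1 - A 2 0 * A 0 1, A 1 0 * A 2 1 - A 2 0 * A 1 1)

/-- The Jacobian of `homography A` is `det A / homCoord A 2 M ^ 3`. -/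
lemma homographyDerivNum_cross (M v w : ℝ × ℝ) :
    (homographyDerivNum A M v).1 * (homographyDerivNum A M w).2 -
        (homographyDerivNum A M v).2 * (homographyDerivNum A M w).1 =
      homCoord A 2 M * A.det * (v.1 * w.2 - v.2 * w.1) := by
  simp only [homographyDerivNum, homCoord, Matrix.det_fin_three]
  ring

lemma homographyDerivNum_transversal {M : ℝ × ℝ} {p q : ℝ}
    (hslope : p * (homographyDerivNum A M (1, q)).1 = (homographyDerivNum A M (1, q)).2) :
    ((homographyDerivNum A M (0, 1)).2 - p * (homographyDerivNum A M (0, 1)).1) *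
      (homographyDerivNum A M (1, q)).1 = homCoord A 2 M * A.det := by
  linear_combination homographyDerivNum_cross A M (1, q) (0, 1) -
    (homographyDerivNum A M (0, 1)).1 * hslope

lemma homographyDerivNumDy_cross (M : ℝ × ℝ) :
    (homographyDerivNumDy A).1 * (homographyDerivNum A M (0, 1)).2 -
        (homographyDerivNumDy A).2 * (homographyDerivNum A M (0, 1)).1 = A 2 1 * A.det := by
  simp only [homographyDerivNumDy, homographyDerivNum, homCoord, Matrix.det_fin_three]
  ring

lemma homographyDerivNum_vertical (M : ℝ × ℝ) (τ p : ℝ) :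
    homographyDerivNum A (M.1, τ) (1, p) = homographyDerivNum A M (1, 0) +
      (τ - M.2) • homographyDerivNumDy A + p • homographyDerivNum A M (0, 1) := by
  ext <;> simp only [homographyDerivNum, homographyDerivNumDy, homCoord, Prod.fst_add,
    Prod.snd_add, Prod.smul_fst, Prod.smul_snd, smul_eq_mul] <;> ring

lemma homographyDerivNum_vertical_zero_one (M : ℝ × ℝ) (τ : ℝ) :
    homographyDerivNum A (M.1, τ) (0, 1) = homographyDerivNum A M (0, 1) := by
  ext <;> simp only [homographyDerivNum, homCoord] <;> ring

variable {A}

lemma hasDerivAt_homography_line {M : ℝ × ℝ} (hM : homCoord A 2 M ≠ 0) (v : ℝ × ℝ) :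
    HasDerivAt (fun t : ℝ => homography A (M + t • v))
      ((homCoord A 2 M ^ 2)⁻¹ • homographyDerivNum A M v) 0 := by
  have hline : ∀ i, HasDerivAt (fun t : ℝ => homCoord A i (M + t • v))
      (A i 0 * v.1 + A i 1 * v.2) 0 := fun i => by
    have : (fun t : ℝ => homCoord A i (M + t • v)) =
        fun t => homCoord A i M + t * (A i 0 * v.1 + A i 1 * v.2) := by
      ext t; simp only [homCoord, Prod.fst_add, Prod.snd_add, Prod.smul_fst, Prod.smul_snd,
        smul_eq_mul]; ring
    rw [this]
    simpa using ((hasDerivAt_id (0 : ℝ)).mul_const (A i 0 * v.1 + A i 1 * v.2)).const_add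
      (homCoord A i M)
  have hM' : homCoord A 2 (M + (0 : ℝ) • v) ≠ 0 := by simpa using hM
  refine (((hline 0).div (hline 2) hM').prodMk ((hline 1).div (hline 2) hM')).congr_deriv ?_
  simp only [zero_smul, add_zero, homographyDerivNum, Prod.smul_mk, smul_eq_mul]
  congr 1 <;> field_simp

lemma contDiffAt_homography {M : ℝ × ℝ} (hM : homCoord A 2 M ≠ 0) :
    ContDiffAt ℝ 1 (homography A) M := by
  unfold homography homCoord at *
  fun_prop (disch := exact hM)

lemma fderiv_homography {M : ℝ × ℝ} (hM : homCoord A 2 M ≠ 0) (v : ℝ × ℝ) :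
    fderiv ℝ (homography A) M v = (homCoord A 2 M ^ 2)⁻¹ • homographyDerivNum A M v := by
  have hline : HasDerivAt (fun t : ℝ => M + t • v) v 0 := by
    simpa using ((hasDerivAt_id (0 : ℝ)).smul_const v).const_add M
  have hd := (contDiffAt_homography hM).differentiableAt one_ne_zero
  exact ((hd.hasFDerivAt.comp_hasDerivAt_of_eq 0 hline (by simp))).unique
    (hasDerivAt_homography_line hM v)

lemma fderiv_homography_injective (hA : A.det ≠ 0) {M : ℝ × ℝ} (hM : homCoord A 2 M ≠ 0) :
    Function.Injective (fderiv ℝ (homography A) M) := by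
  refine (injective_iff_map_eq_zero _).mpr fun v hv => ?_
  have hnum : homographyDerivNum A M v = 0 := by
    rw [fderiv_homography hM] at hv
    simpa [hM] using hv
  have hcross := homographyDerivNum_cross A M v (-v.2, v.1)
  simp only [hnum, Prod.fst_zero, Prod.snd_zero, zero_mul, sub_zero] at hcross
  have hv0 : v.1 ^ 2 + v.2 ^ 2 = 0 := by
    have := mul_ne_zero hM hA
    apply (mul_eq_zero.mp _).resolve_left this
    linear_combination -hcross
  ext <;> simp only [Prod.fst_zero, Prod.snd_zero] <;> nlinarith [sq_nonneg v.1, sq_nonneg v.2]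

lemma hasDerivAt_homCoord_vertical (i : Fin 3) (N : ℝ × ℝ) :
    HasDerivAt (fun τ => homCoord A i (N.1, τ)) (A i 1) N.2 := by
  simpa [homCoord] using
    (((hasDerivAt_id N.2).const_mul (A i 1)).const_add (A i 0 * N.1)).add_const (A i 2)

end Homography

section LocalHomography

variable {A : Matrix (Fin 3) (Fin 3) ℝ} {U : Set (ℝ × ℝ)} {ψ : ℝ × ℝ → ℝ × ℝ} {N : ℝ × ℝ}

lemma eventually_vertical_mem (hU : U ∈ 𝓝 N) : ∀ᶠ τ in 𝓝 N.2, (N.1, τ) ∈ U :=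
  (continuous_const.prodMk continuous_id).tendsto' N.2 N rfl hU

lemma fderiv_eq_of_eqOn_homography (hU : IsOpen U) (hψ : Set.EqOn ψ (homography A) U)
    (hden : ∀ M ∈ U, homCoord A 2 M ≠ 0) (hN : N ∈ U) (v : ℝ × ℝ) :
    fderiv ℝ ψ N v = (homCoord A 2 N ^ 2)⁻¹ • homographyDerivNum A N v := by
  rw [(hψ.eventuallyEq_of_mem (hU.mem_nhds hN)).fderiv_eq, fderiv_homography (hden N hN)]

lemma contDiffAt_of_eqOn_homography (hU : IsOpen U) (hψ : Set.EqOn ψ (homography A) U)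
    (hden : ∀ M ∈ U, homCoord A 2 M ≠ 0) (hN : N ∈ U) : ContDiffAt ℝ 1 ψ N :=
  (contDiffAt_homography (hden N hN)).congr_of_eventuallyEq
    (hψ.eventuallyEq_of_mem (hU.mem_nhds hN))

lemma image_mem_nhds_of_eqOn_homography (hA : A.det ≠ 0) (hU : IsOpen U)
    (hψ : Set.EqOn ψ (homography A) U) (hden : ∀ M ∈ U, homCoord A 2 M ≠ 0) (hN : N ∈ U) :
    ψ '' U ∈ 𝓝 (ψ N) := by
  have hinj : Function.Injective (fderiv ℝ ψ N) := by
    rw [(hψ.eventuallyEq_of_mem (hU.mem_nhds hN)).fderiv_eq]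
    exact fderiv_homography_injective hA (hden N hN)
  have hsurj : (fderiv ℝ ψ N : (ℝ × ℝ) →ₗ[ℝ] ℝ × ℝ).range = ⊤ :=
    LinearMap.range_eq_top.mpr (LinearMap.injective_iff_surjective.mp hinj)
  rw [← ((contDiffAt_of_eqOn_homography hU hψ hden hN).hasStrictFDerivAt
    one_ne_zero).map_nhds_eq_of_surj hsurj]
  exact image_mem_map (hU.mem_nhds hN)

lemma hasDerivAt_vertical_of_eqOn_homography (hU : IsOpen U) (hψ : Set.EqOn ψ (homography A) U)
    (hden : ∀ M ∈ U, homCoord A 2 M ≠ 0) (hN : N ∈ U) :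
    HasDerivAt (fun τ => ψ (N.1, τ))
      ((homCoord A 2 N ^ 2)⁻¹ • homographyDerivNum A N (0, 1)) N.2 :=
  fderiv_eq_of_eqOn_homography hU hψ hden hN (0, 1) ▸ hasDerivAt_vertical
    ((contDiffAt_of_eqOn_homography hU hψ hden hN).differentiableAt one_ne_zero)

end LocalHomography

section SlopeImage

variable {A : Matrix (Fin 3) (Fin 3) ℝ} {U : Set (ℝ × ℝ)} {ψ : ℝ × ℝ → ℝ × ℝ} {N : ℝ × ℝ}
  {F F' : ℝ × ℝ → ℝ}

lemma hasDerivAt_homographyDerivNum_vertical {f : ℝ → ℝ} {f' : ℝ} (hf : HasDerivAt f f' N.2) :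
    HasDerivAt (fun τ => homographyDerivNum A (N.1, τ) (1, f τ))
      (homographyDerivNumDy A + f' • homographyDerivNum A N (0, 1)) N.2 := by
  rw [funext fun τ => homographyDerivNum_vertical A N τ (f τ)]
  refine ((((hasDerivAt_id _).sub_const N.2).smul_const _).const_add _ |>.add
    (hf.smul_const _)).congr_deriv ?_
  simp

lemma slope_image (hA : A.det ≠ 0) (hU : IsOpen U) (hψ : Set.EqOn ψ (homography A) U)
    (hden : ∀ M ∈ U, homCoord A 2 M ≠ 0) (hN : N ∈ U)
    (hmap : (fderiv ℝ ψ N (1, F N)).2 = F' (ψ N) * (fderiv ℝ ψ N (1, F N)).1) :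
    (homographyDerivNum A N (1, F N)).1 ≠ 0 ∧
      F' (ψ N) * (homographyDerivNum A N (1, F N)).1 = (homographyDerivNum A N (1, F N)).2 := by
  have hd := hden N hN
  rw [fderiv_eq_of_eqOn_homography hU hψ hden hN] at hmap
  have hslope : F' (ψ N) * (homographyDerivNum A N (1, F N)).1 =
      (homographyDerivNum A N (1, F N)).2 := by
    simp only [Prod.smul_fst, Prod.smul_snd, smul_eq_mul] at hmap
    field_simp at hmap
    linear_combination -hmap
  refine ⟨fun hs => mul_ne_zero hd hA ?_, hslope⟩
  rw [← homographyDerivNum_transversal A hslope, hs, mul_zero]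

lemma pdy_slope_image (hA : A.det ≠ 0) (hU : IsOpen U) (hψ : Set.EqOn ψ (homography A) U)
    (hden : ∀ M ∈ U, homCoord A 2 M ≠ 0) (hN : N ∈ U) (hF : DifferentiableAt ℝ F N)
    (hF' : DifferentiableAt ℝ F' (ψ N)) (hlin : pdx F' (ψ N) + F' (ψ N) * pdy F' (ψ N) = 0)
    (hmap : ∀ M ∈ U, (fderiv ℝ ψ M (1, F M)).2 = F' (ψ M) * (fderiv ℝ ψ M (1, F M)).1) :
    pdy F' (ψ N) * A.det = homCoord A 2 N *
      ((homographyDerivNumDy A).2 - (homographyDerivNumDy A).1 * F' (ψ N) + pdy F N *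
        ((homographyDerivNum A N (0, 1)).2 - F' (ψ N) * (homographyDerivNum A N (0, 1)).1)) := by
  have hS := hasDerivAt_homographyDerivNum_vertical (A := A) (hasDerivAt_pdy hF)
  have hlhs := (hasDerivAt_comp_of_linear_slope hF' hlin
    (hasDerivAt_vertical_of_eqOn_homography hU hψ hden hN)).mul
    (hasFDerivAt_fst.comp_hasDerivAt _ hS)
  have heq : (fun τ => F' (ψ (N.1, τ)) * (homographyDerivNum A (N.1, τ) (1, F (N.1, τ))).1)
      =ᶠ[𝓝 N.2] fun τ => (homographyDerivNum A (N.1, τ) (1, F (N.1, τ))).2 := by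
    filter_upwards [eventually_vertical_mem (hU.mem_nhds hN)] with τ hτ
    exact (slope_image hA hU hψ hden hτ (hmap _ hτ)).2
  have hderiv := hlhs.unique ((hasFDerivAt_snd.comp_hasDerivAt _ hS).congr_of_eventuallyEq heq)
  have hT := homographyDerivNum_transversal A (slope_image hA hU hψ hden hN (hmap N hN)).2
  simp only [Function.comp_apply, ContinuousLinearMap.coe_fst', ContinuousLinearMap.coe_snd',
    Prod.smul_fst, Prod.smul_snd, Prod.fst_add, Prod.snd_add, smul_eq_mul, Prod.mk.eta] at hderiv
  have hd := hden N hN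
  set d := homCoord A 2 N
  set W := homographyDerivNum A N (0, 1)
  set u := homographyDerivNumDy A
  set p := F' (ψ N)
  set g := pdy F' (ψ N)
  have hchain : g * (W.2 - p * W.1) * (homographyDerivNum A N (1, F N)).1 +
      d ^ 2 * (p * (u.1 + pdy F N * W.1)) = d ^ 2 * (u.2 + pdy F N * W.2) := by
    field_simp at hderiv
    linear_combination hderiv
  apply mul_left_cancel₀ hd
  linear_combination hchain - g * hT

lemma eventually_pdy_slope_image_vertical (hA : A.det ≠ 0) (hU : IsOpen U)
    (hψ : Set.EqOn ψ (homography A) U) (hden : ∀ M ∈ U, homCoord A 2 M ≠ 0) (hN : N ∈ U)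
    (hF : AnalyticOnNhd ℝ F U) (hF' : AnalyticOnNhd ℝ F' (ψ '' U))
    (hlin : ∀ M ∈ ψ '' U, pdx F' M + F' M * pdy F' M = 0)
    (hmap : ∀ M ∈ U, (fderiv ℝ ψ M (1, F M)).2 = F' (ψ M) * (fderiv ℝ ψ M (1, F M)).1) :
    ∀ᶠ τ in 𝓝 N.2, pdy F' (ψ (N.1, τ)) * A.det = homCoord A 2 (N.1, τ) *
      ((homographyDerivNumDy A).2 - (homographyDerivNumDy A).1 * F' (ψ (N.1, τ)) +
        pdy F (N.1, τ) * ((homographyDerivNum A N (0, 1)).2 -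
          F' (ψ (N.1, τ)) * (homographyDerivNum A N (0, 1)).1)) := by
  filter_upwards [eventually_vertical_mem (hU.mem_nhds hN)] with τ hτ
  simpa only [homographyDerivNum_vertical_zero_one] using
    pdy_slope_image hA hU hψ hden hτ (hF _ hτ).differentiableAt
      (hF' _ ⟨_, hτ, rfl⟩).differentiableAt (hlin _ ⟨_, hτ, rfl⟩) hmap

lemma pdy_pdy_slope_image (hA : A.det ≠ 0) (hU : IsOpen U) (hψ : Set.EqOn ψ (homography A) U)
    (hden : ∀ M ∈ U, homCoord A 2 M ≠ 0) (hN : N ∈ U) (hF : AnalyticOnNhd ℝ F U)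
    (hF' : AnalyticOnNhd ℝ F' (ψ '' U))
    (hlin : ∀ M ∈ ψ '' U, pdx F' M + F' M * pdy F' M = 0)
    (hmap : ∀ M ∈ U, (fderiv ℝ ψ M (1, F M)).2 = F' (ψ M) * (fderiv ℝ ψ M (1, F M)).1) :
    pdy (pdy F') (ψ N) * A.det = homCoord A 2 N ^ 3 * pdy (pdy F) N := by
  have hF'N : AnalyticAt ℝ F' (ψ N) := hF' _ ⟨N, hN, rfl⟩
  have hlinN := hlin _ ⟨N, hN, rfl⟩
  have hγ := hasDerivAt_vertical_of_eqOn_homography hU hψ hden hN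
  have hp := hasDerivAt_comp_of_linear_slope hF'N.differentiableAt hlinN hγ
  have hlhs := (hasDerivAt_pdy_comp_of_linear_slope hF'N (Filter.mem_of_superset
    (image_mem_nhds_of_eqOn_homography hA hU hψ hden hN) hlin) hγ).mul_const A.det
  have hrhs := (hasDerivAt_homCoord_vertical (A := A) 2 N).mul
    (((hp.const_mul (homographyDerivNumDy A).1).const_sub (homographyDerivNumDy A).2).add
      ((hasDerivAt_pdy (hF N hN).pdy.differentiableAt).mul
        ((hp.mul_const (homographyDerivNum A N (0, 1)).1).const_sub
          (homographyDerivNum A N (0, 1)).2)))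
  have hderiv := hlhs.unique (hrhs.congr_of_eventuallyEq
    (eventually_pdy_slope_image_vertical hA hU hψ hden hN hF hF' hlin hmap))
  have hTs := homographyDerivNum_transversal A (slope_image hA hU hψ hden hN (hmap N hN)).2
  have hstep := pdy_slope_image hA hU hψ hden hN (hF N hN).differentiableAt
      hF'N.differentiableAt hlinN hmap
  have hdy := homographyDerivNumDy_cross A N
  simp only [Pi.add_apply, Pi.mul_apply, Prod.smul_fst, Prod.smul_snd, smul_eq_mul, Prod.mk.eta]
    at hderiv
  have hd := hden N hN
  set d := homCoord A 2 N
  set W := homographyDerivNum A N (0, 1)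
  set u := homographyDerivNumDy A
  set p := F' (ψ N)
  set g := pdy F' (ψ N)
  set T := W.2 - p * W.1
  have hchain : (pdy (pdy F') (ψ N) * T - g ^ 2 * W.1) * A.det =
      d ^ 2 * A 2 1 * (u.2 - u.1 * p + pdy F N * T) + d ^ 3 * pdy (pdy F) N * T -
        d * g * T * (u.1 + pdy F N * W.1) := by
    field_simp at hderiv
    linear_combination hderiv
  apply mul_left_cancel₀ (left_ne_zero_of_mul (hTs ▸ mul_ne_zero hd hA))
  linear_combination hchain + (g * W.1 - d * A 2 1) * hstep - (g * d) * hdy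

end SlopeImage

section Assembly

variable {A : Matrix (Fin 3) (Fin 3) ℝ} {M M' : ℝ × ℝ} {F F' G G' P Q R P' Q' R' : ℝ × ℝ → ℝ}

/-- How the slope of a linear foliation and its first two `y`-derivatives at `M` determine those
of the image foliation at `M'` under the homography `A`. -/
def SlopeJetImage (A : Matrix (Fin 3) (Fin 3) ℝ) (M M' : ℝ × ℝ) (F F' : ℝ × ℝ → ℝ) : Prop :=
  (homographyDerivNum A M (1, F M)).1 ≠ 0 ∧
    F' M' * (homographyDerivNum A M (1, F M)).1 = (homographyDerivNum A M (1, F M)).2 ∧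
    pdy F' M' * A.det = homCoord A 2 M *
      ((homographyDerivNumDy A).2 - (homographyDerivNumDy A).1 * F' M' + pdy F M *
        ((homographyDerivNum A M (0, 1)).2 - F' M' * (homographyDerivNum A M (0, 1)).1)) ∧
    pdy (pdy F') M' * A.det = homCoord A 2 M ^ 3 * pdy (pdy F) M

lemma SlopeJetImage.sub (hF : SlopeJetImage A M M' F F') (hG : SlopeJetImage A M M' G G') :
    F' M' - G' M' = homCoord A 2 M * A.det * (F M - G M) /
      ((homographyDerivNum A M (1, F M)).1 * (homographyDerivNum A M (1, G M)).1) := by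
  rw [eq_div_iff (mul_ne_zero hF.1 hG.1)]
  linear_combination -homographyDerivNum_cross A M (1, F M) (1, G M) +
    (homographyDerivNum A M (1, G M)).1 * hF.2.1 - (homographyDerivNum A M (1, F M)).1 * hG.2.1

lemma SlopeJetImage.transversal (hF : SlopeJetImage A M M' F F') :
    (homographyDerivNum A M (0, 1)).2 - F' M' * (homographyDerivNum A M (0, 1)).1 =
      homCoord A 2 M * A.det / (homographyDerivNum A M (1, F M)).1 := by
  rw [eq_div_iff hF.1]
  exact homographyDerivNum_transversal A hF.2.1

lemma webDelta_of_slopeJetImage (hA : A.det ≠ 0) (hP : SlopeJetImage A M M' P P')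
    (hQ : SlopeJetImage A M M' Q Q') (hR : SlopeJetImage A M M' R R') :
    webDelta P' Q' R' M' = homCoord A 2 M ^ 3 * A.det * webDelta P Q R M /
      ((homographyDerivNum A M (1, P M)).1 * (homographyDerivNum A M (1, Q M)).1 *
        (homographyDerivNum A M (1, R M)).1) := by
  have hΔ : webDelta P' Q' R' M' * A.det = homCoord A 2 M *
      ((P' M' - Q' M') * pdy R M * ((homographyDerivNum A M (0, 1)).2 -
          R' M' * (homographyDerivNum A M (0, 1)).1) +
        (Q' M' - R' M') * pdy P M * ((homographyDerivNum A M (0, 1)).2 -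
          P' M' * (homographyDerivNum A M (0, 1)).1) +
        (R' M' - P' M') * pdy Q M * ((homographyDerivNum A M (0, 1)).2 -
          Q' M' * (homographyDerivNum A M (0, 1)).1)) := by
    unfold webDelta
    linear_combination (P' M' - Q' M') * hR.2.2.1 + (Q' M' - R' M') * hP.2.2.1 +
      (R' M' - P' M') * hQ.2.2.1
  rw [hP.transversal, hQ.transversal, hR.transversal, hP.sub hQ, hQ.sub hR, hR.sub hP] at hΔ
  have := hP.1; have := hQ.1; have := hR.1
  rw [eq_div_iff (by positivity), ← mul_left_inj' hA]
  unfold webDelta at hΔ ⊢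
  field_simp at hΔ ⊢
  linear_combination hΔ

lemma webCar_eq_of_slopeJetImage (hA : A.det ≠ 0) (hd : homCoord A 2 M ≠ 0)
    (hP : SlopeJetImage A M M' P P') (hQ : SlopeJetImage A M M' Q Q')
    (hR : SlopeJetImage A M M' R R') :
    webCar P Q R M = webCar P' Q' R' M' := by
  unfold webCar
  rw [webDelta_of_slopeJetImage hA hP hQ hR, hP.sub hQ, hQ.sub hR, hR.sub hP,
    eq_div_of_mul_eq hA hP.2.2.2, eq_div_of_mul_eq hA hQ.2.2.2, eq_div_of_mul_eq hA hR.2.2.2]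
  have := hP.1; have := hQ.1; have := hR.1
  field_simp

end Assembly

lemma slopeJetImage_of_mapsLeaves {A : Matrix (Fin 3) (Fin 3) ℝ} {U : Set (ℝ × ℝ)}
    {ψ : ℝ × ℝ → ℝ × ℝ} {N : ℝ × ℝ} {F F' : ℝ × ℝ → ℝ} (hA : A.det ≠ 0) (hU : IsOpen U)
    (hψ : Set.EqOn ψ (homography A) U) (hden : ∀ M ∈ U, homCoord A 2 M ≠ 0) (hN : N ∈ U)
    (hF : AnalyticOnNhd ℝ F U) (hF' : AnalyticOnNhd ℝ F' (ψ '' U))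
    (hlin : ∀ M ∈ ψ '' U, pdx F' M + F' M * pdy F' M = 0)
    (hmap : ∀ M ∈ U, (fderiv ℝ ψ M (1, F M)).2 = F' (ψ M) * (fderiv ℝ ψ M (1, F M)).1) :
    SlopeJetImage A N (ψ N) F F' :=
  ⟨(slope_image hA hU hψ hden hN (hmap N hN)).1, (slope_image hA hU hψ hden hN (hmap N hN)).2,
    pdy_slope_image hA hU hψ hden hN (hF N hN).differentiableAt
      (hF' _ ⟨N, hN, rfl⟩).differentiableAt (hlin _ ⟨N, hN, rfl⟩) hmap,
    pdy_pdy_slope_image hA hU hψ hden hN hF hF' hlin hmap⟩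

theorem car_projective_invariant_general (U : Set (ℝ × ℝ)) (hU : IsOpen U)
    (A : Matrix (Fin 3) (Fin 3) ℝ) (hA : IsUnit A.det)
    (ψ : ℝ × ℝ → ℝ × ℝ)
    (hden : ∀ M ∈ U, A 2 0 * M.1 + A 2 1 * M.2 + A 2 2 ≠ 0)
    (hψ : ∀ M ∈ U, ψ M =
      ((A 0 0 * M.1 + A 0 1 * M.2 + A 0 2) / (A 2 0 * M.1 + A 2 1 * M.2 + A 2 2),
       (A 1 0 * M.1 + A 1 1 * M.2 + A 1 2) / (A 2 0 * M.1 + A 2 1 * M.2 + A 2 2)))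
    (P Q R P' Q' R' : ℝ × ℝ → ℝ)
    (hP : AnalyticOnNhd ℝ P U) (hQ : AnalyticOnNhd ℝ Q U) (hR : AnalyticOnNhd ℝ R U)
    (hP' : AnalyticOnNhd ℝ P' (ψ '' U)) (hQ' : AnalyticOnNhd ℝ Q' (ψ '' U))
    (hR' : AnalyticOnNhd ℝ R' (ψ '' U))
    -- the webs are linear: slopes are constant along the leaves
    (hlinP' : ∀ M ∈ ψ '' U, pdx P' M + P' M * pdy P' M = 0)
    (hlinQ' : ∀ M ∈ ψ '' U, pdx Q' M + Q' M * pdy Q' M = 0)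
    (hlinR' : ∀ M ∈ ψ '' U, pdx R' M + R' M * pdy R' M = 0)
    -- ψ sends leaves of the first web to leaves of the second
    (hmapP : ∀ M ∈ U,
      (fderiv ℝ ψ M (1, P M)).2 = P' (ψ M) * (fderiv ℝ ψ M (1, P M)).1)
    (hmapQ : ∀ M ∈ U,
      (fderiv ℝ ψ M (1, Q M)).2 = Q' (ψ M) * (fderiv ℝ ψ M (1, Q M)).1)
    (hmapR : ∀ M ∈ U,
      (fderiv ℝ ψ M (1, R M)).2 = R' (ψ M) * (fderiv ℝ ψ M (1, R M)).1) :
    ∀ M ∈ U, webCar P Q R M = webCar P' Q' R' (ψ M) := by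
  intro M hM
  exact webCar_eq_of_slopeJetImage hA.ne_zero (hden M hM)
    (slopeJetImage_of_mapsLeaves hA.ne_zero hU hψ hden hM hP hP' hlinP' hmapP)
    (slopeJetImage_of_mapsLeaves hA.ne_zero hU hψ hden hM hQ hQ' hlinQ' hmapQ)
    (slopeJetImage_of_mapsLeaves hA.ne_zero hU hψ hden hM hR hR' hlinR' hmapR)

/-- If a homography `ψ` (given by an invertible 3×3 matrix `A`) maps a non-flat linear
3-web with slope functions `P, Q, R` on `U` onto a non-flat linear 3-web with slope
functions `P', Q', R'`, sending leaves to leaves, then `car` is preserved: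
`car_W(M) = car_{W̄}(ψ M)` for every `M ∈ U`. -/
theorem car_projective_invariant (U : Set (ℝ × ℝ)) (hU : IsOpen U)
    (A : Matrix (Fin 3) (Fin 3) ℝ) (hA : IsUnit A.det)
    (ψ : ℝ × ℝ → ℝ × ℝ)
    (hden : ∀ M ∈ U, A 2 0 * M.1 + A 2 1 * M.2 + A 2 2 ≠ 0)
    (hψ : ∀ M ∈ U, ψ M =
      ((A 0 0 * M.1 + A 0 1 * M.2 + A 0 2) / (A 2 0 * M.1 + A 2 1 * M.2 + A 2 2),
       (A 1 0 * M.1 + A 1 1 * M.2 + A 1 2) / (A 2 0 * M.1 + A 2 1 * M.2 + A 2 2)))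
    (P Q R P' Q' R' : ℝ × ℝ → ℝ)
    (hP : AnalyticOnNhd ℝ P U) (hQ : AnalyticOnNhd ℝ Q U) (hR : AnalyticOnNhd ℝ R U)
    (hP' : AnalyticOnNhd ℝ P' (ψ '' U)) (hQ' : AnalyticOnNhd ℝ Q' (ψ '' U))
    (hR' : AnalyticOnNhd ℝ R' (ψ '' U))
    -- the webs are linear: slopes are constant along the leaves
    (hlinP : ∀ M ∈ U, pdx P M + P M * pdy P M = 0)
    (hlinQ : ∀ M ∈ U, pdx Q M + Q M * pdy Q M = 0)
    (hlinR : ∀ M ∈ U, pdx R M + R M * pdy R M = 0)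
    (hlinP' : ∀ M ∈ ψ '' U, pdx P' M + P' M * pdy P' M = 0)
    (hlinQ' : ∀ M ∈ ψ '' U, pdx Q' M + Q' M * pdy Q' M = 0)
    (hlinR' : ∀ M ∈ ψ '' U, pdx R' M + R' M * pdy R' M = 0)
    -- the webs are 3-webs with Δ nonvanishing (non-flatness, via Agafonov's Lemma 1)
    (hPQ : ∀ M ∈ U, P M ≠ Q M) (hQR : ∀ M ∈ U, Q M ≠ R M) (hRP : ∀ M ∈ U, R M ≠ P M)
    (hΔ : ∀ M ∈ U, webDelta P Q R M ≠ 0)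
    (hΔ' : ∀ M ∈ ψ '' U, webDelta P' Q' R' M ≠ 0)
    -- ψ sends leaves of the first web to leaves of the second
    (hmapP : ∀ M ∈ U,
      (fderiv ℝ ψ M (1, P M)).2 = P' (ψ M) * (fderiv ℝ ψ M (1, P M)).1)
    (hmapQ : ∀ M ∈ U,
      (fderiv ℝ ψ M (1, Q M)).2 = Q' (ψ M) * (fderiv ℝ ψ M (1, Q M)).1)
    (hmapR : ∀ M ∈ U,
      (fderiv ℝ ψ M (1, R M)).2 = R' (ψ M) * (fderiv ℝ ψ M (1, R M)).1) :
    ∀ M ∈ U, webCar P Q R M = webCar P' Q' R' (ψ M) :=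
  car_projective_invariant_general U hU A hA ψ hden hψ P Q R P' Q' R' hP hQ hR hP' hQ' hR' hlinP'
    hlinQ' hlinR' hmapP hmapQ hmapR
end
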